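/- Norm recovery via a TRO approximate identity: let M ⊆ B(H,K) be a TRO and suppose (m_i)_{i∈I} is a net with m_i ∈ M^{n_i} (columns over M), ‖m_i‖ ≤ 1, such that m_i m_i* l → l in norm for all l ∈ M and hence m_i m_i* b m_i m_i* → b for all b in B = closure(span(M M* B(K) M M*))-type algebra satisfying b ∈ closure(span(M M* b M M*)). Then sup_i ‖m_i* b m_i‖ = ‖b‖ for every such b. -/

import Mathlib

/-!
Viewing the column `c` as the operator `T : H^n → K`, `x ↦ Σ_k c_k x_k`, gives
`colSum c = T T*` and `colMat b c = T* b T`. The C*-identity `‖T T*‖ = ‖T‖²` makes `T` a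
contraction, so `‖T T* b T T*‖ ≤ ‖T* b T‖ ≤ ‖b‖`, and the left-hand side tends to `‖b‖`.
-/

open ContinuousLinearMap

noncomputable section

variable {H K : Type*}
    [NormedAddCommGroup H] [InnerProductSpace ℂ H] [CompleteSpace H]
    [NormedAddCommGroup K] [InnerProductSpace ℂ K] [CompleteSpace K]

/-- For a column `c = (c 0, ..., c (n-1))ᵀ` of operators in `B(H,K)`, the operator
`Σ_k c_k c_k* ∈ B(K)`. -/
def colSum {n : ℕ} (c : Fin n → (H →L[ℂ] K)) : K →L[ℂ] K :=
  ∑ k : Fin n, (c k) ∘L adjoint (c k)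

/-- For `b ∈ B(K)` and a column `c` over `B(H,K)`, the `n × n` operator matrix
`(c_j* b c_k)` acting on the Hilbert space `H^n = PiLp 2 (fun _ => H)`. -/
def colMat {n : ℕ} (b : K →L[ℂ] K) (c : Fin n → (H →L[ℂ] K)) :
    PiLp 2 (fun _ : Fin n => H) →L[ℂ] PiLp 2 (fun _ : Fin n => H) :=
  ((PiLp.continuousLinearEquiv 2 ℂ (fun _ : Fin n => H)).symm :
      ((i : Fin n) → H) →L[ℂ] PiLp 2 (fun _ : Fin n => H)) ∘L
    (ContinuousLinearMap.pi fun j : Fin n =>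
      ∑ k : Fin n, ((adjoint (c j)) ∘L b ∘L (c k)) ∘L
        (ContinuousLinearMap.proj (R := ℂ) (φ := fun _ : Fin n => H) k)) ∘L
    ((PiLp.continuousLinearEquiv 2 ℂ (fun _ : Fin n => H)) :
      PiLp 2 (fun _ : Fin n => H) →L[ℂ] ((i : Fin n) → H))

section

open Filter Topology

variable {𝕜 : Type*} [RCLike 𝕜]

theorem norm_comp_comp_le_of_norm_le_one {E F G L : Type*}
    [SeminormedAddCommGroup E] [SeminormedAddCommGroup F] [SeminormedAddCommGroup G]
    [SeminormedAddCommGroup L] [NormedSpace 𝕜 E] [NormedSpace 𝕜 F] [NormedSpace 𝕜 G]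
    [NormedSpace 𝕜 L] {A : G →L[𝕜] L} {C : E →L[𝕜] F} (hA : ‖A‖ ≤ 1) (hC : ‖C‖ ≤ 1)
    (B : F →L[𝕜] G) : ‖A ∘L B ∘L C‖ ≤ ‖B‖ :=
  calc ‖A ∘L B ∘L C‖ ≤ ‖A‖ * (‖B‖ * ‖C‖) :=
        (opNorm_comp_le _ _).trans (by gcongr; exact opNorm_comp_le _ _)
    _ ≤ 1 * (‖B‖ * 1) := by gcongr
    _ = ‖B‖ := by ring

variable {E F : Type*} [NormedAddCommGroup E] [InnerProductSpace 𝕜 E] [CompleteSpace E]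
  [NormedAddCommGroup F] [InnerProductSpace 𝕜 F] [CompleteSpace F]

theorem norm_le_one_of_norm_comp_adjoint_le_one {T : E →L[𝕜] F}
    (h : ‖T ∘L adjoint T‖ ≤ 1) : ‖T‖ ≤ 1 := by
  have hsq : ‖T ∘L adjoint T‖ = ‖T‖ * ‖T‖ := by
    simpa using norm_adjoint_comp_self (adjoint T)
  nlinarith [norm_nonneg T]

theorem iSup_norm_adjoint_comp_comp_eq_norm {ι : Type*} [Nonempty ι] (l : Filter ι) [l.NeBot]
    {V : ι → Type*} [∀ i, NormedAddCommGroup (V i)] [∀ i, InnerProductSpace 𝕜 (V i)]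
    [∀ i, CompleteSpace (V i)] {T : (i : ι) → V i →L[𝕜] F} (hT : ∀ i, ‖T i‖ ≤ 1)
    {b : F →L[𝕜] F}
    (hb : Tendsto (fun i => (T i ∘L adjoint (T i)) ∘L b ∘L (T i ∘L adjoint (T i))) l (𝓝 b)) :
    ⨆ i, ‖adjoint (T i) ∘L b ∘L T i‖ = ‖b‖ := by
  have hT' : ∀ i, ‖adjoint (T i)‖ ≤ 1 := fun i => (adjoint.norm_map _).trans_le (hT i)
  have hle : ∀ i, ‖adjoint (T i) ∘L b ∘L T i‖ ≤ ‖b‖ := fun i =>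
    norm_comp_comp_le_of_norm_le_one (hT' i) (hT i) b
  have hge : ∀ i, ‖(T i ∘L adjoint (T i)) ∘L b ∘L (T i ∘L adjoint (T i))‖ ≤
      ‖adjoint (T i) ∘L b ∘L T i‖ := fun i =>
    norm_comp_comp_le_of_norm_le_one (hT i) (hT' i) (adjoint (T i) ∘L b ∘L T i)
  refine le_antisymm (ciSup_le hle) (le_of_tendsto hb.norm (Eventually.of_forall fun i => ?_))
  exact (hge i).trans (le_ciSup ⟨‖b‖, Set.forall_mem_range.2 hle⟩ i)

end

def colOp {n : ℕ} (c : Fin n → (H →L[ℂ] K)) : PiLp 2 (fun _ : Fin n => H) →L[ℂ] K :=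
  ∑ k : Fin n, c k ∘L PiLp.proj 2 (fun _ : Fin n => H) k

omit [CompleteSpace H] [CompleteSpace K] in
lemma colOp_apply {n : ℕ} (c : Fin n → (H →L[ℂ] K)) (x : PiLp 2 (fun _ : Fin n => H)) :
    colOp c x = ∑ k, c k (x k) := by
  simp [colOp]

lemma adjoint_colOp_apply {n : ℕ} (c : Fin n → (H →L[ℂ] K)) (y : K) :
    adjoint (colOp c) y = WithLp.toLp 2 (fun j => adjoint (c j) y) := by
  refine ext_inner_right ℂ fun x => ?_
  simp [adjoint_inner_left, colOp_apply, PiLp.inner_apply, inner_sum]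

lemma colSum_eq_colOp_comp_adjoint {n : ℕ} (c : Fin n → (H →L[ℂ] K)) :
    colSum c = colOp c ∘L adjoint (colOp c) := by
  ext y
  simp [colSum, colOp_apply, adjoint_colOp_apply]

lemma colMat_eq_adjoint_colOp_comp {n : ℕ} (b : K →L[ℂ] K) (c : Fin n → (H →L[ℂ] K)) :
    colMat b c = adjoint (colOp c) ∘L b ∘L colOp c := by
  ext x j
  simp [colMat, colOp_apply, adjoint_colOp_apply, map_sum]

theorem stmt19_general
    {ι : Type*} [Nonempty ι] (F : Filter ι) [F.NeBot]
    (n : ι → ℕ) (c : (i : ι) → Fin (n i) → (H →L[ℂ] K))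
    (hnorm : ∀ i, ‖colSum (c i)‖ ≤ 1)
    (b : K →L[ℂ] K)
    (happrox : Filter.Tendsto (fun i => colSum (c i) ∘L b ∘L colSum (c i)) F (nhds b)) :
    ⨆ i, ‖colMat b (c i)‖ = ‖b‖ := by
  simp only [colMat_eq_adjoint_colOp_comp]
  simp only [colSum_eq_colOp_comp_adjoint] at hnorm happrox
  exact iSup_norm_adjoint_comp_comp_eq_norm F
    (fun i => norm_le_one_of_norm_comp_adjoint_le_one (hnorm i)) happrox

/-- Norm recovery via a TRO approximate identity: let `M ⊆ B(H,K)` be a TRO and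
`(m_i)` a net of columns over `M` with `‖m_i m_i*‖ = ‖Σ_k m_{i,k} m_{i,k}*‖ ≤ 1` such
that `m_i m_i* b m_i m_i* → b` in norm for a fixed `b ∈ B(K)`. Then
`sup_i ‖m_i* b m_i‖ = ‖b‖`, where `m_i* b m_i` is the operator matrix `(m_{i,j}* b m_{i,k})`
acting on `H^{n_i}`. -/
theorem stmt19
    (M : Submodule ℂ (H →L[ℂ] K)) (hMclosed : IsClosed (M : Set (H →L[ℂ] K)))
    (hTRO : ∀ m ∈ M, ∀ n ∈ M, ∀ l ∈ M, m ∘L (adjoint n) ∘L l ∈ M)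
    {ι : Type*} [Nonempty ι] (F : Filter ι) [F.NeBot]
    (n : ι → ℕ) (c : (i : ι) → Fin (n i) → (H →L[ℂ] K))
    (hcM : ∀ i, ∀ k, c i k ∈ M)
    (hnorm : ∀ i, ‖colSum (c i)‖ ≤ 1)
    (b : K →L[ℂ] K)
    (happrox : Filter.Tendsto (fun i => colSum (c i) ∘L b ∘L colSum (c i)) F (nhds b)) :
    ⨆ i, ‖colMat b (c i)‖ = ‖b‖ :=
  stmt19_general F n c hnorm b happrox
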